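/- Let n ≥ 3 be an integer. The set ℬ_n of triple points of the Böröczky configuration is finite and has cardinality ⌊n(n−3)/6⌋ + 1. -/

import Mathlib

open Complex

/-- `P n j = exp(2πij/n)`. -/
noncomputable def Ppt (n j : ℕ) : ℂ := Complex.exp (2 * Real.pi * Complex.I * j / n)

/-- `Q n j = -exp(-4πij/n)`. -/
noncomputable def Qpt (n j : ℕ) : ℂ := -Complex.exp (-(4 * Real.pi * Complex.I * j) / n)

open scoped Classical in
/-- The `j`-th line of the Böröczky configuration: the line through `P n j` and
`Q n j` if they are distinct, and the tangent line to the unit circle at `P n j`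
otherwise (identifying ℝ² with ℂ). -/
noncomputable def Bline (n j : ℕ) : Set ℂ :=
  if Ppt n j = Qpt n j then
    {z : ℂ | (z * (starRingEnd ℂ) (Ppt n j)).re = 1}
  else
    {z : ℂ | ((z - Ppt n j) * (starRingEnd ℂ) (Qpt n j - Ppt n j)).im = 0}

/-- The set of triple points of the Böröczky configuration: points lying on at
least three of the lines `L_0, …, L_{n-1}`. -/
def TriplePts (n : ℕ) : Set ℂ :=
  {z : ℂ | 3 ≤ ({j : ℕ | j < n ∧ z ∈ Bline n j} : Set ℕ).ncard}

/-!
Write `ζ = exp(2πi/n)`, so that `P_j = ζ^j` and `Q_j = -ζ^{-2j}`. The line `L_j` is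
`{z | z - ζ^{-j} z̄ = ζ^j - ζ^{-2j}}`; two lines `L_a`, `L_b` meet exactly at
`ζ^a + ζ^b + ζ^{-a-b}`, so three distinct lines `L_a`, `L_b`, `L_c` are concurrent iff
`a + b + c ≡ 0 (mod n)`, at `ζ^a + ζ^b + ζ^c`, and no fourth line passes through that point.
Triple points are thus in bijection with the 3-element subsets of `ZMod n` with zero sum.
Counting the ordered pairs `(a, b)` for which `a`, `b`, `-(a + b)` are distinct by
inclusion–exclusion gives `6 T = n² - 3n + 2w`, where `w ∈ [1, 3]` is the number of solutions
of `3a = 0`, and this determines `T = ⌊n(n-3)/6⌋ + 1`.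
-/

open ComplexConjugate Finset

lemma Circle.coe_mul_conj (u : Circle) : (u : ℂ) * conj (u : ℂ) = 1 := by
  simp [Complex.mul_conj]

/-- The line through `u` and `-ū²` (the tangent at `u` when they coincide). -/
def boroczkyLine (u : Circle) : Set ℂ :=
  {z | z - conj (u : ℂ) * conj z = u - conj (u : ℂ) ^ 2}

lemma mem_boroczkyLine_iff {u : Circle} {z : ℂ} :
    z ∈ boroczkyLine u ↔ z - conj (u : ℂ) * conj z - (u - conj (u : ℂ) ^ 2) = 0 :=
  sub_eq_zero.symm

lemma setOf_re_mul_conj_eq_one_eq_boroczkyLine {u : Circle}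
    (hu : (u : ℂ) = -conj (u : ℂ) ^ 2) :
    {z : ℂ | (z * conj (u : ℂ)).re = 1} = boroczkyLine u := by
  ext z
  have key : z - conj (u : ℂ) * conj z - (u - conj (u : ℂ) ^ 2) =
      u * (z * conj (u : ℂ) + conj (z * conj (u : ℂ)) - 2) := by
    simp only [map_mul, Complex.conj_conj]
    linear_combination (conj (u : ℂ) * conj z - z) * u.coe_mul_conj + (1 - u * conj z) * hu
  rw [mem_boroczkyLine_iff, key, mul_eq_zero_iff_left u.coe_ne_zero, Complex.add_conj,
    sub_eq_zero, Set.mem_ofPred_eq]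
  norm_cast
  constructor <;> intro h <;> linarith

lemma setOf_im_mul_conj_eq_zero_eq_boroczkyLine {u : Circle}
    (hu : (u : ℂ) ≠ -conj (u : ℂ) ^ 2) :
    {z : ℂ | ((z - u) * conj (-conj (u : ℂ) ^ 2 - u)).im = 0} = boroczkyLine u := by
  ext z
  have hne : -(conj (u : ℂ) + (u : ℂ) ^ 2) ≠ 0 := by
    refine neg_ne_zero.mpr fun h ↦ hu ?_
    linear_combination conj (u : ℂ) * h - u * u.coe_mul_conj
  have key : (z - u) * conj (-conj (u : ℂ) ^ 2 - u) -
      conj ((z - u) * conj (-conj (u : ℂ) ^ 2 - u)) =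
      -(conj (u : ℂ) + (u : ℂ) ^ 2) * (z - conj (u : ℂ) * conj z - (u - conj (u : ℂ) ^ 2)) := by
    simp only [map_mul, map_sub, map_neg, map_pow, Complex.conj_conj]
    linear_combination (u * conj (u : ℂ) - u * conj z) * u.coe_mul_conj
  rw [mem_boroczkyLine_iff, ← mul_eq_zero_iff_left hne, ← key, sub_eq_zero, eq_comm,
    Complex.conj_eq_iff_im, Set.mem_ofPred_eq]

lemma mem_boroczkyLine_inter_iff {u v : Circle} (huv : u ≠ v) {z : ℂ} :
    z ∈ boroczkyLine u ∧ z ∈ boroczkyLine v ↔ z = u + v + conj (u : ℂ) * conj (v : ℂ) := by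
  have hu := u.coe_mul_conj
  have hv := v.coe_mul_conj
  have hne : conj (v : ℂ) - conj (u : ℂ) ≠ 0 := fun h ↦
    huv.symm (Circle.ext ((starRingEnd ℂ).injective (sub_eq_zero.mp h)))
  rw [mem_boroczkyLine_iff, mem_boroczkyLine_iff]
  constructor
  · rintro ⟨hzu, hzv⟩
    have hconj : conj z = conj (u : ℂ) + conj (v : ℂ) + u * v := by
      refine mul_left_cancel₀ hne ?_
      linear_combination hzu - hzv + v * hu - u * hv
    rw [← Complex.conj_conj z, hconj]
    simp only [map_add, map_mul, Complex.conj_conj]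
  · intro hz
    have hconj : conj z = conj (u : ℂ) + conj (v : ℂ) + u * v := by
      rw [hz]; simp only [map_add, map_mul, Complex.conj_conj]
    rw [hconj, hz]
    constructor
    · linear_combination (-v) * hu
    · linear_combination (-u) * hv

lemma mem_boroczkyLine_three_iff {u v w : Circle} (huv : u ≠ v) (huw : u ≠ w) (hvw : v ≠ w)
    {z : ℂ} : z ∈ boroczkyLine u ∧ z ∈ boroczkyLine v ∧ z ∈ boroczkyLine w ↔
      u * v * w = 1 ∧ z = u + v + w := by
  have hu := u.coe_mul_conj
  have hv := v.coe_mul_conj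
  have hw := w.coe_mul_conj
  rw [← Circle.coe_eq_one, Circle.coe_mul, Circle.coe_mul]
  constructor
  · rintro ⟨h₁, h₂, h₃⟩
    have e₁₂ := (mem_boroczkyLine_inter_iff huv).1 ⟨h₁, h₂⟩
    have e₁₃ := (mem_boroczkyLine_inter_iff huw).1 ⟨h₁, h₃⟩
    have hconj : conj (u : ℂ) * conj (v : ℂ) * conj (w : ℂ) = 1 := by
      have : ((v : ℂ) - w) * (1 - conj (u : ℂ) * conj (v : ℂ) * conj (w : ℂ)) = 0 := by
        linear_combination e₁₃ - e₁₂ - conj (u : ℂ) * conj (w : ℂ) * hv +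
          conj (u : ℂ) * conj (v : ℂ) * hw
      have hvw' : (v : ℂ) - w ≠ 0 := sub_ne_zero.mpr fun h ↦ hvw (Circle.ext h)
      exact (sub_eq_zero.mp ((mul_eq_zero_iff_left hvw').mp this)).symm
    have huvw : (u : ℂ) * v * w = 1 := by
      linear_combination -((u : ℂ) * v * w) * hconj + v * conj (v : ℂ) * w * conj (w : ℂ) * hu +
        w * conj (w : ℂ) * hv + hw
    refine ⟨huvw, ?_⟩
    rw [e₁₂]
    linear_combination -(conj (u : ℂ) * conj (v : ℂ)) * huvw + w * v * conj (v : ℂ) * hu + w * hv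
  · rintro ⟨huvw, rfl⟩
    have e₁₂ := (mem_boroczkyLine_inter_iff (z := u + v + w) huv).2 (by
      linear_combination conj (u : ℂ) * conj (v : ℂ) * huvw - w * v * conj (v : ℂ) * hu - w * hv)
    have e₂₃ := (mem_boroczkyLine_inter_iff (z := u + v + w) hvw).2 (by
      linear_combination conj (v : ℂ) * conj (w : ℂ) * huvw - u * w * conj (w : ℂ) * hv - u * hw)
    exact ⟨e₁₂.1, e₁₂.2, e₂₃.2⟩

lemma Ppt_eq_toCircle (n j : ℕ) [NeZero n] : Ppt n j = ZMod.toCircle (j : ZMod n) := by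
  rw [ZMod.toCircle_natCast, Ppt]

lemma Qpt_eq_neg_conj_Ppt_sq (n j : ℕ) : Qpt n j = -conj (Ppt n j) ^ 2 := by
  rw [Qpt, Ppt, ← Complex.exp_conj, ← Complex.exp_nat_mul]
  congr 2
  simp only [map_div₀, map_mul, Complex.conj_ofNat, Complex.conj_ofReal, Complex.conj_I,
    map_natCast]
  push_cast
  ring

lemma Bline_eq_boroczkyLine (n j : ℕ) [NeZero n] :
    Bline n j = boroczkyLine (ZMod.toCircle (j : ZMod n)) := by
  rw [Bline, Qpt_eq_neg_conj_Ppt_sq, Ppt_eq_toCircle]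
  split_ifs with h
  · exact setOf_re_mul_conj_eq_one_eq_boroczkyLine h
  · exact setOf_im_mul_conj_eq_zero_eq_boroczkyLine h

lemma Finset.sum_insert_insert_singleton {α β : Type*} [DecidableEq α] [AddCommMonoid β]
    {a b c : α} (hab : a ≠ b) (hac : a ≠ c) (hbc : b ≠ c) (f : α → β) :
    ∑ x ∈ {a, b, c}, f x = f a + f b + f c := by
  rw [sum_insert (by simp [hab, hac]), sum_pair hbc, add_assoc]

lemma card_filter_snd_eq {α β : Type*} [Fintype α] [Fintype β] [DecidableEq β] (f : α → β) :
    #{p : α × β | p.2 = f p.1} = Fintype.card α := by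
  rw [← card_univ (α := α), ← card_map ⟨fun a ↦ (a, f a), fun _ _ h ↦ congrArg Prod.fst h⟩]
  congr 1
  ext ⟨a, b⟩
  simp only [mem_filter, mem_univ, true_and, mem_map]
  constructor
  · rintro rfl
    exact ⟨a, rfl⟩
  · rintro ⟨a', h⟩
    obtain ⟨rfl, rfl⟩ := Prod.mk.inj h
    rfl

lemma card_filter_fst_eq {α β : Type*} [Fintype α] [Fintype β] [DecidableEq α] (f : β → α) :
    #{p : α × β | p.1 = f p.2} = Fintype.card β := by
  rw [← card_filter_snd_eq f]
  exact card_nbij' Prod.swap Prod.swap (fun p ↦ by simp) (fun p ↦ by simp)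
    (fun p _ ↦ p.swap_swap) (fun p _ ↦ p.swap_swap)

section ZeroSumTriples

variable {G : Type*} [AddCommGroup G]

lemma neg_two_nsmul_eq_self_iff (a : G) : -(2 • a) = a ↔ 3 • a = 0 := by
  rw [neg_eq_iff_add_eq_zero, show 2 • a + a = 3 • a by abel]

lemma neg_add_eq_left_iff (a b : G) : -(a + b) = a ↔ b = -(2 • a) := by
  rw [neg_eq_iff_add_eq_zero, eq_neg_iff_add_eq_zero, show a + b + a = b + 2 • a by abel]

lemma neg_add_eq_right_iff (a b : G) : -(a + b) = b ↔ a = -(2 • b) := by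
  rw [add_comm, neg_add_eq_left_iff]

variable [Fintype G] [DecidableEq G]

variable (G) in
def zeroSumTriples : Finset (Finset G) := {s | #s = 3 ∧ ∑ a ∈ s, a = 0}

lemma mem_zeroSumTriples {s : Finset G} : s ∈ zeroSumTriples G ↔
    ∃ a b c, a ≠ b ∧ a ≠ c ∧ b ≠ c ∧ a + b + c = 0 ∧ s = {a, b, c} := by
  simp only [zeroSumTriples, mem_filter, mem_univ, true_and, card_eq_three]
  constructor
  · rintro ⟨⟨a, b, c, hab, hac, hbc, rfl⟩, hsum⟩
    exact ⟨a, b, c, hab, hac, hbc, by rwa [sum_insert_insert_singleton hab hac hbc] at hsum, rfl⟩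
  · rintro ⟨a, b, c, hab, hac, hbc, hsum, rfl⟩
    exact ⟨⟨a, b, c, hab, hac, hbc, rfl⟩, by rwa [sum_insert_insert_singleton hab hac hbc]⟩

lemma eq_of_mem_zeroSumTriples {s : Finset G} (hs : s ∈ zeroSumTriples G) {a b : G}
    (ha : a ∈ s) (hb : b ∈ s) (hab : a ≠ b) : s = {a, b, -(a + b)} := by
  simp only [zeroSumTriples, mem_filter, mem_univ, true_and] at hs
  have hb' : b ∈ s.erase a := mem_erase.2 ⟨hab.symm, hb⟩
  obtain ⟨c, hc⟩ : ∃ c, (s.erase a).erase b = {c} := by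
    rw [← card_eq_one, card_erase_of_mem hb', card_erase_of_mem ha, hs.1]
  have hcs : c ∈ (s.erase a).erase b := hc ▸ mem_singleton_self c
  have hsum : a + (b + c) = 0 := by
    rw [← hs.2, ← add_sum_erase s (fun x ↦ x) ha, ← add_sum_erase _ (fun x ↦ x) hb', hc,
      sum_singleton]
  have hc_eq : c = -(a + b) := by
    rw [eq_neg_iff_add_eq_zero, ← hsum]; abel
  simp only [mem_erase] at hcs
  symm
  refine eq_of_subset_of_card_le ?_ ?_
  · simp only [insert_subset_iff, singleton_subset_iff, ← hc_eq]
    exact ⟨ha, hb, hcs.2.2⟩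
  · rw [hs.1, ← hc_eq, card_triple_eq_three_iff.2 ⟨hab, hcs.2.1.symm, hcs.1.symm⟩]

lemma card_filter_not_distinct_add_two_mul :
    #{p : G × G | p.1 = p.2 ∨ -(p.1 + p.2) = p.1 ∨ -(p.1 + p.2) = p.2} +
      2 * #{a : G | 3 • a = 0} = 3 * Fintype.card G := by
  -- `A`, `B`, `C` are graphs of maps `G → G`, and any two of them meet exactly in `D`.
  set A : Finset (G × G) := {p | p.1 = p.2}
  set B : Finset (G × G) := {p | -(p.1 + p.2) = p.1}
  set C : Finset (G × G) := {p | -(p.1 + p.2) = p.2}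
  set D : Finset (G × G) := ({a : G | 3 • a = 0} : Finset G).diag
  have hA : #A = Fintype.card G := by
    rw [← card_filter_snd_eq (id : G → G)]
    simp only [A, id, eq_comm]
  have hB : #B = Fintype.card G := by
    rw [← card_filter_snd_eq fun a : G ↦ -(2 • a)]
    simp only [B, neg_add_eq_left_iff]
  have hC : #C = Fintype.card G := by
    rw [← card_filter_fst_eq fun b : G ↦ -(2 • b)]
    simp only [C, neg_add_eq_right_iff]
  have hAB : A ∩ B = D := by
    ext ⟨a, b⟩
    simp only [A, B, D, mem_inter, mem_filter, mem_univ, true_and, mem_diag]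
    constructor
    · rintro ⟨rfl, h⟩
      exact ⟨(neg_two_nsmul_eq_self_iff a).1 (by rwa [two_nsmul]), rfl⟩
    · rintro ⟨h, rfl⟩
      exact ⟨rfl, by rw [← two_nsmul]; exact (neg_two_nsmul_eq_self_iff a).2 h⟩
  have hAC : A ∩ C = D := by
    rw [← hAB]
    ext ⟨a, b⟩
    simp only [A, B, C, mem_inter, mem_filter, mem_univ, true_and]
    constructor <;> rintro ⟨rfl, h⟩ <;> exact ⟨rfl, h⟩
  have hBC : B ∩ C = D := by
    rw [← hAB]
    ext ⟨a, b⟩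
    simp only [A, B, C, mem_inter, mem_filter, mem_univ, true_and]
    constructor
    · rintro ⟨h₁, h₂⟩
      obtain rfl : a = b := h₁.symm.trans h₂
      exact ⟨rfl, h₁⟩
    · rintro ⟨rfl, h⟩
      exact ⟨h, h⟩
  have hD : #D = #{a : G | 3 • a = 0} := diag_card _
  have hBC_card := card_union_add_card_inter B C
  have hABC_card := card_union_add_card_inter A (B ∪ C)
  rw [hBC] at hBC_card
  rw [inter_union_distrib_left, hAB, hAC, union_self] at hABC_card
  rw [filter_or, filter_or]
  change #(A ∪ (B ∪ C)) + _ = _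
  omega

lemma card_filter_distinct_eq_six_mul :
    #{p : G × G | p.1 ≠ p.2 ∧ -(p.1 + p.2) ≠ p.1 ∧ -(p.1 + p.2) ≠ p.2} =
      6 * #(zeroSumTriples G) := by
  -- `(a, b) ↦ {a, b, -(a + b)}` is six-to-one, the fibre over `s` being `s.offDiag`.
  rw [card_eq_sum_card_fiberwise (f := fun p ↦ ({p.1, p.2, -(p.1 + p.2)} : Finset G))
    (t := zeroSumTriples G)]
  · rw [mul_comm, ← smul_eq_mul, ← sum_const]
    refine sum_congr rfl fun s hs ↦ ?_
    have h3 : #s = 3 := (mem_filter.1 hs).2.1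
    rw [← show #s.offDiag = 6 by rw [offDiag_card, h3]]
    congr 1
    ext ⟨a, b⟩
    simp only [mem_filter, mem_univ, true_and, mem_offDiag]
    constructor
    · rintro ⟨hab, rfl⟩
      simp [hab.1]
    · rintro ⟨ha, hb, hab⟩
      have hs' := eq_of_mem_zeroSumTriples hs ha hb hab
      obtain ⟨-, hac, hbc⟩ := card_triple_eq_three_iff.1 (hs' ▸ h3)
      exact ⟨⟨hab, hac.symm, hbc.symm⟩, hs'.symm⟩
  · rintro ⟨a, b⟩ h
    simp only [coe_filter, mem_univ, true_and, Set.mem_ofPred_eq] at h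
    exact mem_zeroSumTriples.2 ⟨a, b, -(a + b), h.1, h.2.1.symm, h.2.2.symm, by abel, rfl⟩

theorem six_mul_card_zeroSumTriples_add :
    6 * #(zeroSumTriples G) + 3 * Fintype.card G =
      Fintype.card G ^ 2 + 2 * #{a : G | 3 • a = 0} := by
  have hsplit := card_filter_add_card_filter_not (s := univ)
    fun p : G × G ↦ p.1 = p.2 ∨ -(p.1 + p.2) = p.1 ∨ -(p.1 + p.2) = p.2
  simp only [not_or, ← Ne.eq_def, card_filter_distinct_eq_six_mul, card_univ,
    Fintype.card_prod] at hsplit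
  have := card_filter_not_distinct_add_two_mul (G := G)
  rw [sq]
  omega

end ZeroSumTriples

section Configuration

variable {G : Type*} [AddCommGroup G] {ψ : AddChar G Circle}

lemma mem_boroczkyLine_apply_three_iff (hψ : Function.Injective ψ) {a b c : G} (hab : a ≠ b)
    (hac : a ≠ c) (hbc : b ≠ c) {z : ℂ} :
    z ∈ boroczkyLine (ψ a) ∧ z ∈ boroczkyLine (ψ b) ∧ z ∈ boroczkyLine (ψ c) ↔
      a + b + c = 0 ∧ z = ψ a + ψ b + ψ c := by
  rw [mem_boroczkyLine_three_iff (hψ.ne hab) (hψ.ne hac) (hψ.ne hbc), ← AddChar.map_add_eq_mul,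
    ← AddChar.map_add_eq_mul, ← AddChar.map_zero_eq_one ψ, hψ.eq_iff]

variable [Fintype G] [DecidableEq G]

open scoped Classical in
noncomputable def linesThrough (ψ : AddChar G Circle) (z : ℂ) : Finset G :=
  {a | z ∈ boroczkyLine (ψ a)}

lemma linesThrough_add_add (hψ : Function.Injective ψ) {a b c : G} (hab : a ≠ b) (hac : a ≠ c)
    (hbc : b ≠ c) (h : a + b + c = 0) :
    linesThrough ψ (ψ a + ψ b + ψ c) = {a, b, c} := by
  have habc := (mem_boroczkyLine_apply_three_iff hψ hab hac hbc).2 ⟨h, rfl⟩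
  ext x
  simp only [linesThrough, mem_filter, mem_univ, true_and, mem_insert, mem_singleton]
  constructor
  · intro hx
    by_contra! hx'
    have := (mem_boroczkyLine_apply_three_iff hψ hab hx'.1.symm hx'.2.1.symm).1
      ⟨habc.1, habc.2.1, hx⟩
    exact hx'.2.2 (add_left_cancel (this.1.trans h.symm))
  · rintro (rfl | rfl | rfl)
    exacts [habc.1, habc.2.1, habc.2.2]

lemma setOf_three_le_card_linesThrough (hψ : Function.Injective ψ) :
    {z | 3 ≤ #(linesThrough ψ z)} = (fun s ↦ ∑ a ∈ s, (ψ a : ℂ)) '' zeroSumTriples G := by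
  ext z
  simp only [Set.mem_ofPred_eq, Set.mem_image, mem_coe, mem_zeroSumTriples]
  constructor
  · intro h
    obtain ⟨a, ha, b, hb, c, hc, hab, hac, hbc⟩ := two_lt_card.1 h
    simp only [linesThrough, mem_filter, mem_univ, true_and] at ha hb hc
    obtain ⟨hsum, rfl⟩ := (mem_boroczkyLine_apply_three_iff hψ hab hac hbc).1 ⟨ha, hb, hc⟩
    exact ⟨_, ⟨a, b, c, hab, hac, hbc, hsum, rfl⟩, sum_insert_insert_singleton hab hac hbc _⟩
  · rintro ⟨_, ⟨a, b, c, hab, hac, hbc, hsum, rfl⟩, rfl⟩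
    rw [sum_insert_insert_singleton hab hac hbc, linesThrough_add_add hψ hab hac hbc hsum,
      card_eq_three.2 ⟨a, b, c, hab, hac, hbc, rfl⟩]

lemma injOn_sum_zeroSumTriples (hψ : Function.Injective ψ) :
    Set.InjOn (fun s ↦ ∑ a ∈ s, (ψ a : ℂ)) (zeroSumTriples G) := by
  refine Set.LeftInvOn.injOn (f₁' := linesThrough ψ) fun s hs ↦ ?_
  obtain ⟨a, b, c, hab, hac, hbc, hsum, rfl⟩ := mem_zeroSumTriples.1 hs
  rw [sum_insert_insert_singleton hab hac hbc, linesThrough_add_add hψ hab hac hbc hsum]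

end Configuration

lemma ncard_setOf_lt_and_natCast_mem {n : ℕ} [NeZero n] (s : Finset (ZMod n)) :
    {j : ℕ | j < n ∧ (j : ZMod n) ∈ s}.ncard = #s := by
  rw [← card_image_of_injective s (ZMod.val_injective n), ← Set.ncard_coe_finset]
  congr 1
  ext j
  simp only [Set.mem_ofPred_eq, coe_image, Set.mem_image, mem_coe]
  constructor
  · rintro ⟨hj, hs⟩
    exact ⟨j, hs, ZMod.val_cast_of_lt hj⟩
  · rintro ⟨a, ha, rfl⟩
    exact ⟨a.val_lt, by rwa [ZMod.natCast_zmod_val]⟩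

lemma card_zeroSumTriples_zmod {n : ℕ} [NeZero n] (hn : 3 ≤ n) :
    #(zeroSumTriples (ZMod n)) = n * (n - 3) / 6 + 1 := by
  -- With `w = #{a | 3 • a = 0}`, `6 T = n (n - 3) + 2 w` and `1 ≤ w ≤ 3` leave no choice for `T`.
  have hcount := six_mul_card_zeroSumTriples_add (G := ZMod n)
  have h_le : #{a : ZMod n | 3 • a = 0} ≤ 3 := by
    convert IsAddCyclic.card_nsmul_eq_zero_le (α := ZMod n) three_pos
  have h_pos : 0 < #{a : ZMod n | 3 • a = 0} :=
    card_pos.2 ⟨0, mem_filter.2 ⟨mem_univ _, smul_zero 3⟩⟩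
  rw [ZMod.card] at hcount
  obtain ⟨m, rfl⟩ : ∃ m, n = m + 3 := ⟨n - 3, by omega⟩
  simp only [Nat.add_sub_cancel]
  have : (m + 3) ^ 2 = (m + 3) * m + 3 * (m + 3) := by ring
  omega

lemma TriplePts_eq_setOf_three_le_card_linesThrough (n : ℕ) [NeZero n] :
    TriplePts n = {z | 3 ≤ #(linesThrough (G := ZMod n) ZMod.toCircle z)} := by
  ext z
  simp only [TriplePts, Set.mem_ofPred_eq, Bline_eq_boroczkyLine,
    ← ncard_setOf_lt_and_natCast_mem, linesThrough, mem_filter, mem_univ, true_and]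

/-- The set of triple points of the Böröczky configuration is finite of
cardinality `⌊n(n-3)/6⌋ + 1`. -/
theorem boroczky_card_triple_points (n : ℕ) (hn : 3 ≤ n) :
    (TriplePts n).Finite ∧ (TriplePts n).ncard = n * (n - 3) / 6 + 1 := by
  have : NeZero n := ⟨by omega⟩
  rw [TriplePts_eq_setOf_three_le_card_linesThrough,
    setOf_three_le_card_linesThrough ZMod.injective_toCircle]
  refine ⟨(zeroSumTriples _).finite_toSet.image _, ?_⟩
  rw [(injOn_sum_zeroSumTriples ZMod.injective_toCircle).ncard_image, Set.ncard_coe_finset,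
    card_zeroSumTriples_zmod hn]
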